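/- Let K be a field of characteristic different from 2, and set α = 1, β = 2, λ = 1, μ = 1 in the definition of the binary octic forms F₁ and F₂. Then F₁ and F₂ are not equivalent under automorphisms of ℙ¹ fixing the point (0:1): there exist no a, d, e ∈ K∖{0} and c ∈ K such that F₁(a·u, c·u + d·v) = e·F₂(u,v) in K[u,v]. -/
import Mathlib
set_option maxHeartbeats 2000000


/-!  Formalization of a statement from "Two kinds of examples of curves with
isomorphic complements" (J. Blanc). -/

open MvPolynomial

noncomputable section

/-- The coefficients `c₀, …, c₇` (and `0` beyond index `7`):
`c₀ = 3α²β²`, `c₁ = 13α²β²μ`, `c₂ = 22α²β²μ²`, `c₃ = −3αβ(λ⁴(α+β) − 6αβμ³)`,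
`c₄ = −αβμ(8λ⁴β − 7αβμ³ + 6λ⁴α)`, `c₅ = −αβμ²(3λ⁴α − αβμ³ + 7λ⁴β)`,
`c₆ = λ⁴(λ⁴(αβ + α² + β²) − 2αβ²μ³)`, `c₇ = λ⁸β²μ`, with `a = α`, `b = β`,
`l = λ`, `m = μ`. -/
def cc (K : Type) [Field K] (a b l m : K) : ℕ → K
  | 0 => 3 * a ^ 2 * b ^ 2
  | 1 => 13 * a ^ 2 * b ^ 2 * m
  | 2 => 22 * a ^ 2 * b ^ 2 * m ^ 2
  | 3 => -(3 * a * b * (l ^ 4 * (a + b) - 6 * a * b * m ^ 3))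
  | 4 => -(a * b * m * (8 * l ^ 4 * b - 7 * a * b * m ^ 3 + 6 * l ^ 4 * a))
  | 5 => -(a * b * m ^ 2 * (3 * l ^ 4 * a - a * b * m ^ 3 + 7 * l ^ 4 * b))
  | 6 => l ^ 4 * (l ^ 4 * (a * b + a ^ 2 + b ^ 2) - 2 * a * b ^ 2 * m ^ 3)
  | 7 => l ^ 8 * b ^ 2 * m
  | _ => 0

/-- The binary octic form `F₁(u,v) = v·Σ_{i=0}^{7} cᵢ·uⁱ·v^{7−i}` in `K[u,v]`, with
`u = X 0`, `v = X 1`.  The form `F₂` is `F1 K b a l m`, i.e. `F₁` with the roles of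
`α` and `β` exchanged. -/
def F1 (K : Type) [Field K] (a b l m : K) : MvPolynomial (Fin 2) K :=
  X 1 * ∑ i ∈ Finset.range 8, C (cc K a b l m i) * (X 0) ^ i * (X 1) ^ (7 - i)

/-- if `char K ≠ 2` then, for `α = 1`, `β = 2`, `λ = 1`, `μ = 1`, the
octic forms `F₁` and `F₂` are not equivalent under any automorphism
`(u,v) ↦ (p·u, c·u + d·v)` of `ℙ¹` fixing `(0:1)`. -/
theorem statement15 (K : Type) [Field K] (hchar : ringChar K ≠ 2) :
    ¬ ∃ (p d e c : K), p ≠ 0 ∧ d ≠ 0 ∧ e ≠ 0 ∧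
      aeval ![C p * (X 0 : MvPolynomial (Fin 2) K), C c * X 0 + C d * X 1]
          (F1 K 1 2 1 1)
        = C e * F1 K 2 1 1 1 := by
  rintro ⟨p, d, e, c, hp, hd, he, heq⟩
  have h2 := congrArg (MvPolynomial.aeval ![(Polynomial.X : Polynomial K), 1]) heq
  simp only [F1, cc, Finset.sum_range_succ, Finset.sum_range_zero, map_add, map_mul, map_pow,
    map_neg, map_sub, map_ofNat, map_one, aeval_X, aeval_C, zero_add, Polynomial.algebraMap_eq,
    Matrix.cons_val_zero, Matrix.cons_val_one, Matrix.head_cons] at h2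
  have heq2 : (Polynomial.C (12 * d ^ 8) * Polynomial.X ^ 0 + Polynomial.C (52 * p * d ^ 7 + 96 * c * d ^ 7) * Polynomial.X ^ 1 + Polynomial.C (88 * p ^ 2 * d ^ 6 + 364 * p * c * d ^ 6 + 336 * c ^ 2 * d ^ 6) * Polynomial.X ^ 2 + Polynomial.C (54 * p ^ 3 * d ^ 5 + 528 * p ^ 2 * c * d ^ 5 + 1092 * p * c ^ 2 * d ^ 5 + 672 * c ^ 3 * d ^ 5) * Polynomial.X ^ 3 + Polynomial.C ((-16) * p ^ 4 * d ^ 4 + 270 * p ^ 3 * c * d ^ 4 + 1320 * p ^ 2 * c ^ 2 * d ^ 4 + 1820 * p * c ^ 3 * d ^ 4 + 840 * c ^ 4 * d ^ 4) * Polynomial.X ^ 4 + Polynomial.C ((-30) * p ^ 5 * d ^ 3 + (-64) * p ^ 4 * c * d ^ 3 + 540 * p ^ 3 * c ^ 2 * d ^ 3 + 1760 * p ^ 2 * c ^ 3 * d ^ 3 + 1820 * p * c ^ 4 * d ^ 3 + 672 * c ^ 5 * d ^ 3) * Polynomial.X ^ 5 + Polynomial.C ((-1) * p ^ 6 * d ^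 2 + (-90) * p ^ 5 * c * d ^ 2 + (-96) * p ^ 4 * c ^ 2 * d ^ 2 + 540 * p ^ 3 * c ^ 3 * d ^ 2 + 1320 * p ^ 2 * c ^ 4 * d ^ 2 + 1092 * p * c ^ 5 * d ^ 2 + 336 * c ^ 6 * d ^ 2) * Polynomial.X ^ 6 + Polynomial.C (4 * p ^ 7 * d + (-2) * p ^ 6 * c * d + (-90) * p ^ 5 * c ^ 2 * d + (-64) * p ^ 4 * c ^ 3 * d + 270 * p ^ 3 * c ^ 4 * d + 528 * p ^ 2 * c ^ 5 * d + 364 * p * c ^ 6 * d + 96 * c ^ 7 * d) * Polynomial.X ^ 7 + Polynomial.C (4 * p ^ 7 * c + (-1) * p ^ 6 * c ^ 2 + (-30) * p ^ 5 * c ^ 3 + (-16) * p ^ 4 * c ^ 4 + 54 * p ^ 3 * c ^ 5 + 88 * p ^ 2 * c ^ 6 + 52 * p * c ^ 7 + 12 * c ^ 8) * Polynomial.X ^ 8 : Polynomial K) = Polynomial.C (e * (12)) * Polynomial.X ^ 0 + Polynomial.C (e * (52)) * Polynomial.X ^ 1 + Polynomial.C (e * (88)) * Polynomial.X ^ 2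 + Polynomial.C (e * (54)) * Polynomial.X ^ 3 + Polynomial.C (e * (-12)) * Polynomial.X ^ 4 + Polynomial.C (e * (-22)) * Polynomial.X ^ 5 + Polynomial.C (e * (3)) * Polynomial.X ^ 6 + Polynomial.C (e * (1)) * Polynomial.X ^ 7 := by
    simp only [map_add, map_mul, map_pow, map_neg, map_ofNat, map_one]
    linear_combination h2
  have E0 : (12 * d ^ 8 : K) = e * (12) := by
    have h := congrArg (fun P => Polynomial.coeff P 0) heq2
    simp only [Polynomial.coeff_add, Polynomial.coeff_C_mul, Polynomial.coeff_X_pow] at h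
    norm_num at h
    linear_combination h
  have E1 : (52 * p * d ^ 7 + 96 * c * d ^ 7 : K) = e * (52) := by
    have h := congrArg (fun P => Polynomial.coeff P 1) heq2
    simp only [Polynomial.coeff_add, Polynomial.coeff_C_mul, Polynomial.coeff_X_pow] at h
    norm_num at h
    linear_combination h
  have E2 : (88 * p ^ 2 * d ^ 6 + 364 * p * c * d ^ 6 + 336 * c ^ 2 * d ^ 6 : K) = e * (88) := by
    have h := congrArg (fun P => Polynomial.coeff P 2) heq2
    simp only [Polynomial.coeff_add, Polynomial.coeff_C_mul, Polynomial.coeff_X_pow] at h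
    norm_num at h
    linear_combination h
  have E3 : (54 * p ^ 3 * d ^ 5 + 528 * p ^ 2 * c * d ^ 5 + 1092 * p * c ^ 2 * d ^ 5 + 672 * c ^ 3 * d ^ 5 : K) = e * (54) := by
    have h := congrArg (fun P => Polynomial.coeff P 3) heq2
    simp only [Polynomial.coeff_add, Polynomial.coeff_C_mul, Polynomial.coeff_X_pow] at h
    norm_num at h
    linear_combination h
  have E4 : ((-16) * p ^ 4 * d ^ 4 + 270 * p ^ 3 * c * d ^ 4 + 1320 * p ^ 2 * c ^ 2 * d ^ 4 + 1820 * p * c ^ 3 * d ^ 4 + 840 * c ^ 4 * d ^ 4 : K) = e * (-12) := by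
    have h := congrArg (fun P => Polynomial.coeff P 4) heq2
    simp only [Polynomial.coeff_add, Polynomial.coeff_C_mul, Polynomial.coeff_X_pow] at h
    norm_num at h
    linear_combination h
  have E5 : ((-30) * p ^ 5 * d ^ 3 + (-64) * p ^ 4 * c * d ^ 3 + 540 * p ^ 3 * c ^ 2 * d ^ 3 + 1760 * p ^ 2 * c ^ 3 * d ^ 3 + 1820 * p * c ^ 4 * d ^ 3 + 672 * c ^ 5 * d ^ 3 : K) = e * (-22) := by
    have h := congrArg (fun P => Polynomial.coeff P 5) heq2
    simp only [Polynomial.coeff_add, Polynomial.coeff_C_mul, Polynomial.coeff_X_pow] at h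
    norm_num at h
    linear_combination h
  have E7 : (4 * p ^ 7 * d + (-2) * p ^ 6 * c * d + (-90) * p ^ 5 * c ^ 2 * d + (-64) * p ^ 4 * c ^ 3 * d + 270 * p ^ 3 * c ^ 4 * d + 528 * p ^ 2 * c ^ 5 * d + 364 * p * c ^ 6 * d + 96 * c ^ 7 * d : K) = e * (1) := by
    have h := congrArg (fun P => Polynomial.coeff P 7) heq2
    simp only [Polynomial.coeff_add, Polynomial.coeff_C_mul, Polynomial.coeff_X_pow] at h
    norm_num at h
    linear_combination h
  have hd' : d⁻¹ ≠ 0 := inv_ne_zero hd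
  set u := d⁻¹ with hu
  set ip := p⁻¹ with hip
  have hdu : d * u = 1 := mul_inv_cancel₀ hd
  have hpip : p * ip = 1 := mul_inv_cancel₀ hp
  have hP0 : (12 : K) = e * u ^ 8 * (12) := by
    linear_combination u ^ 8 * E0 + ((-1) * (12) * (1 + (d * u) + (d * u) ^ 2 + (d * u) ^ 3 + (d * u) ^ 4 + (d * u) ^ 5 + (d * u) ^ 6 + (d * u) ^ 7)) * hdu
  have hP1 : (52 * (p * u) + 96 * (c * u) : K) = e * u ^ 8 * (52) := by
    linear_combination u ^ 8 * E1 + ((-1) * (52 * p + 96 * c) * u * (1 + (d * u) + (d * u) ^ 2 + (d * u) ^ 3 + (d * u) ^ 4 + (d * u) ^ 5 + (d * u) ^ 6)) * hdu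
  have hP2 : (88 * (p * u) ^ 2 + 364 * (p * u) * (c * u) + 336 * (c * u) ^ 2 : K) = e * u ^ 8 * (88) := by
    linear_combination u ^ 8 * E2 + ((-1) * (88 * p ^ 2 + 364 * p * c + 336 * c ^ 2) * u ^ 2 * (1 + (d * u) + (d * u) ^ 2 + (d * u) ^ 3 + (d * u) ^ 4 + (d * u) ^ 5)) * hdu
  have hP3 : (54 * (p * u) ^ 3 + 528 * (p * u) ^ 2 * (c * u) + 1092 * (p * u) * (c * u) ^ 2 + 672 * (c * u) ^ 3 : K) = e * u ^ 8 * (54) := by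
    linear_combination u ^ 8 * E3 + ((-1) * (54 * p ^ 3 + 528 * p ^ 2 * c + 1092 * p * c ^ 2 + 672 * c ^ 3) * u ^ 3 * (1 + (d * u) + (d * u) ^ 2 + (d * u) ^ 3 + (d * u) ^ 4)) * hdu
  have hP4 : ((-16) * (p * u) ^ 4 + 270 * (p * u) ^ 3 * (c * u) + 1320 * (p * u) ^ 2 * (c * u) ^ 2 + 1820 * (p * u) * (c * u) ^ 3 + 840 * (c * u) ^ 4 : K) = e * u ^ 8 * (-12) := by
    linear_combination u ^ 8 * E4 + ((-1) * ((-16) * p ^ 4 + 270 * p ^ 3 * c + 1320 * p ^ 2 * c ^ 2 + 1820 * p * c ^ 3 + 840 * c ^ 4) * u ^ 4 * (1 + (d * u) + (d * u) ^ 2 + (d * u) ^ 3)) * hdu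
  have hP5 : ((-30) * (p * u) ^ 5 + (-64) * (p * u) ^ 4 * (c * u) + 540 * (p * u) ^ 3 * (c * u) ^ 2 + 1760 * (p * u) ^ 2 * (c * u) ^ 3 + 1820 * (p * u) * (c * u) ^ 4 + 672 * (c * u) ^ 5 : K) = e * u ^ 8 * (-22) := by
    linear_combination u ^ 8 * E5 + ((-1) * ((-30) * p ^ 5 + (-64) * p ^ 4 * c + 540 * p ^ 3 * c ^ 2 + 1760 * p ^ 2 * c ^ 3 + 1820 * p * c ^ 4 + 672 * c ^ 5) * u ^ 5 * (1 + (d * u) + (d * u) ^ 2)) * hdu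
  have hP7 : (4 * (p * u) ^ 7 + (-2) * (p * u) ^ 6 * (c * u) + (-90) * (p * u) ^ 5 * (c * u) ^ 2 + (-64) * (p * u) ^ 4 * (c * u) ^ 3 + 270 * (p * u) ^ 3 * (c * u) ^ 4 + 528 * (p * u) ^ 2 * (c * u) ^ 5 + 364 * (p * u) * (c * u) ^ 6 + 96 * (c * u) ^ 7 : K) = e * u ^ 8 * (1) := by
    linear_combination u ^ 8 * E7 + ((-1) * (4 * p ^ 7 + (-2) * p ^ 6 * c + (-90) * p ^ 5 * c ^ 2 + (-64) * p ^ 4 * c ^ 3 + 270 * p ^ 3 * c ^ 4 + 528 * p ^ 2 * c ^ 5 + 364 * p * c ^ 6 + 96 * c ^ 7) * u ^ 7 * (1)) * hdu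
  have hqU : (p * u) * (d * ip) = 1 := by linear_combination (p * ip) * hdu + hpip
  have hQ : (4120896 : K) = 0 := by
    linear_combination (1373632 * (p * u) ^ 3 + (-25715976) * (p * u) ^ 2 * (c * u) + 13929487 * (p * u) ^ 2 + (-85573488) * (p * u) * (c * u) ^ 2 + 92704612 * (p * u) * (c * u) + (-30894721) * (p * u) + (-79856504) * (c * u) ^ 3 + 105297984 * (c * u) ^ 2 + (-57036408) * (c * u) + 343408) * hP0 + ((-316992) * (p * u) ^ 3 + 5934456 * (p * u) ^ 2 * (c * u) + (-3214497) * (p * u) ^ 2 + 19747728 * (p * u) * (c * u) ^ 2 + (-21393372) * (p * u) * (c * u) + 7129551 * (p * u) + 18428424 * (c * u) ^ 3 + (-19747728) * (c * u) ^ 2 + 8231124 * (c * u) + 7129551) * hP1 + ((-2689704) * (c * u) ^ 2 + 2913846 * (c * u) + (-6112392)) * hP2 + (2790190) * hP3 + ((-1030224)) * hP4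
  have hc3 : (1 : K) + 3 * (48 * (p * u) ^ 9 * (d * ip) + (-72) * (p * u) ^ 8 * (c * u) * (d * ip) + 48 * (p * u) ^ 8 * (d * ip) + (-1008) * (p * u) ^ 7 * (c * u) ^ 2 * (d * ip) + 24 * (p * u) ^ 7 * (c * u) * (d * ip) + 32 * (p * u) ^ 7 * (d * ip) + 288 * (p * u) ^ 6 * (c * u) ^ 3 * (d * ip) + (-1104) * (p * u) ^ 6 * (c * u) ^ 2 * (d * ip) + (-16) * (p * u) ^ 6 * (c * u) * (d * ip) + 2928 * (p * u) ^ 5 * (c * u) ^ 4 * (d * ip) + (-1848) * (p * u) ^ 5 * (c * u) ^ 3 * (d * ip) + (-720) * (p * u) ^ 5 * (c * u) ^ 2 * (d * ip) + 2328 * (p * u) ^ 4 * (c * u) ^ 5 * (d * ip) + 2472 * (p * u) ^ 4 * (c * u) ^ 4 * (d * ip) + (-512) * (p * u) ^ 4 * (c * u) ^ 3 * (d * ip) + (-24) * (p * u) ^ 4 * (d * ip) + 1272 * (p * u) ^ 3 * (c * u) ^ 6 * (d * ip) + 9576 * (p * u) ^ 3 * (c * u) ^ 5 * (d * ip) + 2160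 * (p * u) ^ 3 * (c * u) ^ 4 * (d * ip) + (-182) * (p * u) ^ 3 * (c * u) * (d * ip) + (-12) * (p * u) ^ 3 * (d * ip) + 3120 * (p * u) ^ 2 * (c * u) ^ 7 * (d * ip) + 10704 * (p * u) ^ 2 * (c * u) ^ 6 * (d * ip) + 4224 * (p * u) ^ 2 * (c * u) ^ 5 * (d * ip) + (-460) * (p * u) ^ 2 * (c * u) ^ 2 * (d * ip) + (-136) * (p * u) ^ 2 * (c * u) * (d * ip) + (-12) * (p * u) ^ 2 * (d * ip) + 3216 * (p * u) * (c * u) ^ 8 * (d * ip) + 5520 * (p * u) * (c * u) ^ 7 * (d * ip) + 2912 * (p * u) * (c * u) ^ 6 * (d * ip) + (-616) * (p * u) * (c * u) ^ 3 * (d * ip) + (-248) * (p * u) * (c * u) ^ 2 * (d * ip) + (-72) * (p * u) * (c * u) * (d * ip) + 17 * (p * u) * (d * ip) + 1152 * (c * u) ^ 9 * (d * ip) + 1152 * (c * u) ^ 8 * (d * ip) + 768 * (c * u) ^ 7 * (d * ip) + (-392) * (c * u) ^ 4 * (d * ip) + (-80) * (c * u) ^ 3 * (d * ip) + (-80) *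 (c * u) ^ 2 * (d * ip) + 32 * (c * u) * (d * ip)) = 0 := by
    linear_combination ((p * u) ^ 2 * (d * ip) + (-1) * (p * u) * (c * u) * (d * ip) + (p * u) * (d * ip) + (c * u) ^ 2 * (d * ip) + (c * u) * (d * ip) + (d * ip)) * hP1 + ((-1) * (p * u) ^ 2 * (d * ip) + (p * u) * (c * u) * (d * ip) + (-1) * (p * u) * (d * ip) + (-1) * (c * u) ^ 2 * (d * ip) + (-1) * (c * u) * (d * ip) + (-1) * (d * ip)) * hP2 + ((-1) * (d * ip)) * hP4 + (36 * (p * u) ^ 2 * (d * ip) + (-36) * (p * u) * (c * u) * (d * ip) + 36 * (p * u) * (d * ip) + 36 * (c * u) ^ 2 * (d * ip) + 36 * (c * u) * (d * ip) + 24 * (d * ip)) * hP7 + ((-1)) * hqU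
  have hne3 : (3 : K) ≠ 0 := fun hzz => by rw [hzz] at hc3; simp at hc3
  have hc13 : (1 : K) + 13 * (96 * (p * u) ^ 10 + (-128) * (p * u) ^ 9 * (c * u) + 96 * (p * u) ^ 9 + (-2120) * (p * u) ^ 8 * (c * u) ^ 2 + (-48) * (p * u) ^ 8 * (c * u) + 216 * (p * u) ^ 7 * (c * u) ^ 3 + (-2160) * (p * u) ^ 7 * (c * u) ^ 2 + (-64) * (p * u) ^ 7 * (c * u) + 96 * (p * u) ^ 7 + 7784 * (p * u) ^ 6 * (c * u) ^ 4 + (-1536) * (p * u) ^ 6 * (c * u) ^ 3 + 32 * (p * u) ^ 6 * (c * u) ^ 2 + (-48) * (p * u) ^ 6 * (c * u) + 8352 * (p * u) ^ 5 * (c * u) ^ 5 + 6480 * (p * u) ^ 5 * (c * u) ^ 4 + 1440 * (p * u) ^ 5 * (c * u) ^ 3 + (-2160) * (p * u) ^ 5 * (c * u) ^ 2 + (-1056) * (p * u) ^ 4 * (c * u) ^ 6 + 12672 * (p * u) ^ 4 * (c * u) ^ 5 + 1024 * (p * u) ^ 4 * (c * u) ^ 4 + (-1536) * (p * u) ^ 4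 * (c * u) ^ 3 + (-48) * (p * u) ^ 4 + (-8216) * (p * u) ^ 3 * (c * u) ^ 7 + 8736 * (p * u) ^ 3 * (c * u) ^ 6 + (-4320) * (p * u) ^ 3 * (c * u) ^ 5 + 6480 * (p * u) ^ 3 * (c * u) ^ 4 + (-46) * (p * u) ^ 3 * (c * u) + (-8256) * (p * u) ^ 2 * (c * u) ^ 8 + 2304 * (p * u) ^ 2 * (c * u) ^ 7 + (-8448) * (p * u) ^ 2 * (c * u) ^ 6 + 12672 * (p * u) ^ 2 * (c * u) ^ 5 + 264 * (p * u) ^ 2 * (c * u) ^ 2 + (-24) * (p * u) ^ 2 + (-4368) * (p * u) * (c * u) ^ 9 + (-5824) * (p * u) * (c * u) ^ 7 + 8736 * (p * u) * (c * u) ^ 6 + 432 * (p * u) * (c * u) ^ 3 + (-68) * (p * u) * (c * u) + (-1152) * (c * u) ^ 10 + (-1536) * (c * u) ^ 8 + 2304 * (c * u) ^ 7 + 216 * (c * u) ^ 4 + (-48) * (c * u) ^ 2 + (-1)) = 0 := by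
    linear_combination ((-4) * (p * u) ^ 2 + (-1)) * hP0 + ((-6) * (p * u) ^ 3 + 5 * (p * u) ^ 2 * (c * u) + 3 * (c * u) ^ 3 + 4 * (c * u)) * hP1 + ((-3) * (p * u) ^ 2 + (-3)) * hP2 + (3) * hP4 + (312 * (p * u) ^ 3 + (-260) * (p * u) ^ 2 * (c * u) + 312 * (p * u) ^ 2 + (-156) * (c * u) ^ 3 + (-208) * (c * u) + 312) * hP7
  have hne13 : (13 : K) ≠ 0 := fun hzz => by rw [hzz] at hc13; simp at hc13
  have hc127 : (1 : K) + 127 * ((-16) * (p * u) ^ 11 + 72 * (p * u) ^ 10 * (c * u) + 48 * (p * u) ^ 10 + 296 * (p * u) ^ 9 * (c * u) ^ 2 + (-72) * (p * u) ^ 9 * (c * u) + 32 * (p * u) ^ 9 + (-1104) * (p * u) ^ 8 * (c * u) ^ 3 + (-1152) * (p * u) ^ 8 * (c * u) ^ 2 + 64 * (p * u) ^ 8 * (c * u) + 32 * (p * u) ^ 8 + (-1320) * (p * u) ^ 7 * (c * u) ^ 4 + 424 * (p * u) ^ 7 * (c * u) ^ 3 + (-840) * (p * u) ^ 7 * (c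 * u) ^ 2 + 168 * (p * u) ^ 7 * (c * u) + 48 * (p * u) ^ 7 + 1232 * (p * u) ^ 6 * (c * u) ^ 5 + 6136 * (p * u) ^ 6 * (c * u) ^ 4 + (-2272) * (p * u) ^ 6 * (c * u) ^ 3 + (-812) * (p * u) ^ 6 * (c * u) ^ 2 + (-24) * (p * u) ^ 6 * (c * u) + 1648 * (p * u) ^ 5 * (c * u) ^ 6 + 3192 * (p * u) ^ 5 * (c * u) ^ 5 + 2680 * (p * u) ^ 5 * (c * u) ^ 4 + (-4652) * (p * u) ^ 5 * (c * u) ^ 3 + (-1080) * (p * u) ^ 5 * (c * u) ^ 2 + 4 * (p * u) ^ 5 + 4000 * (p * u) ^ 4 * (c * u) ^ 7 + (-9472) * (p * u) ^ 4 * (c * u) ^ 6 + 10904 * (p * u) ^ 4 * (c * u) ^ 5 + (-784) * (p * u) ^ 4 * (c * u) ^ 4 + (-768) * (p * u) ^ 4 * (c * u) ^ 3 + (-8) * (p * u) ^ 4 * (c * u) + (-24) * (p * u) ^ 4 + 13552 * (p * u) ^ 3 * (c * u) ^ 8 + (-11568) * (p * u) ^ 3 * (c * u) ^ 7 + 8072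 * (p * u) ^ 3 * (c * u) ^ 6 + 16644 * (p * u) ^ 3 * (c * u) ^ 5 + 3240 * (p * u) ^ 3 * (c * u) ^ 4 + (-40) * (p * u) ^ 3 * (c * u) ^ 2 + 96 * (p * u) ^ 3 * (c * u) + (-8) * (p * u) ^ 3 + 17728 * (p * u) ^ 2 * (c * u) ^ 9 + (-1440) * (p * u) ^ 2 * (c * u) ^ 8 + (-2512) * (p * u) ^ 2 * (c * u) ^ 7 + 27200 * (p * u) ^ 2 * (c * u) ^ 6 + 6336 * (p * u) ^ 2 * (c * u) ^ 5 + (-164) * (p * u) ^ 2 * (c * u) ^ 3 + 456 * (p * u) ^ 2 * (c * u) ^ 2 + (-44) * (p * u) ^ 2 * (c * u) + (-8) * (p * u) ^ 2 + 10272 * (p * u) * (c * u) ^ 10 + 3520 * (p * u) * (c * u) ^ 9 + (-5360) * (p * u) * (c * u) ^ 8 + 17512 * (p * u) * (c * u) ^ 7 + 4368 * (p * u) * (c * u) ^ 6 + (-340) * (p * u) * (c * u) ^ 4 + 440 * (p * u) * (c * u) ^ 3 + (-52) * (p * u) * (c * u) ^ 2 + (-40) * (p * u) * (c * u) + (-8)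 * (p * u) + 2304 * (c * u) ^ 11 + 1536 * (c * u) ^ 10 + (-1920) * (c * u) ^ 9 + 4416 * (c * u) ^ 8 + 1152 * (c * u) ^ 7 + (-192) * (c * u) ^ 5 + 84 * (c * u) ^ 4 + 12 * (c * u) ^ 3 + (-48) * (c * u) ^ 2 + (-12) * (c * u) + 5) = 0 := by
    linear_combination ((-40) * (p * u) ^ 4 + 30 * (p * u) ^ 3 * (c * u) + 3 * (p * u) ^ 3 + 50 * (p * u) ^ 2 * (c * u) ^ 2 + 62 * (p * u) ^ 2 * (c * u) + (-24) * (p * u) ^ 2 + 17 * (p * u) * (c * u) ^ 3 + 20 * (p * u) * (c * u) ^ 2 + (-60) * (p * u) * (c * u) + (-24) * (p * u) + (-33) * (c * u) ^ 4 + (-9) * (c * u) ^ 3 + (-44) * (c * u) ^ 2 + (-15) * (c * u) + 53) * hP0 + (19 * (p * u) ^ 4 + (-46) * (p * u) ^ 3 * (c * u) + (-30) * (p * u) ^ 3 + 8 * (p * u) ^ 2 * (c * u) ^ 2 + 15 * (p * u) ^ 2 * (c * u) + (-14) * (p * u) ^ 2 + (-43) * (p * u) * (c * u) ^ 3 + 54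 * (p * u) * (c * u) ^ 2 + (-35) * (p * u) * (c * u) + (-14) * (p * u) + (-51) * (c * u) ^ 4 + (-37) * (c * u) ^ 3 + 59 * (c * u) ^ 2 + (-58) * (c * u) + (-14)) * hP1 + ((-57) * (c * u) + (-6)) * hP3 + ((-36) * (c * u) + 63) * hP4 + (16) * hP5 + ((-508) * (p * u) ^ 4 + 2032 * (p * u) ^ 3 * (c * u) + 1524 * (p * u) ^ 3 + (-1016) * (p * u) ^ 2 * (c * u) ^ 2 + (-1524) * (p * u) ^ 2 * (c * u) + 1016 * (p * u) ^ 2 + 2032 * (p * u) * (c * u) ^ 3 + (-3048) * (p * u) * (c * u) ^ 2 + 2540 * (p * u) * (c * u) + 1016 * (p * u) + 3048 * (c * u) ^ 4 + 2032 * (c * u) ^ 3 + (-2540) * (c * u) ^ 2 + 5842 * (c * u) + 1524) * hP7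
  have hne127 : (127 : K) ≠ 0 := fun hzz => by rw [hzz] at hc127; simp at hc127
  have hne2 : (2 : K) ≠ 0 := Ring.two_ne_zero hchar
  have : (4120896 : K) ≠ 0 := by
    rw [show (4120896 : K) = 2 ^ 6 * 3 * 13 ^ 2 * 127 by norm_num]
    exact mul_ne_zero (mul_ne_zero (mul_ne_zero (pow_ne_zero _ hne2) hne3) (pow_ne_zero _ hne13)) hne127
  exact this hQ

end
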